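/- For a continuous map f : X → X on a compact metric space and every integer n > 0, h_L^+(f^n) = n · h_L^+(f) and h_L^-(f^n) = n · h_L^-(f). -/

import Mathlib

open Set Filter Topology Metric
open scoped ENNReal

/-- `U` is an open cover of `X`: a family of open sets whose union is `X`. -/
def IsOpenCover {X : Type*} [MetricSpace X] (U : Set (Set X)) : Prop :=
  (∀ A ∈ U, IsOpen A) ∧ ⋃₀ U = Set.univ

/-- The Lebesgue number of a cover `U`: the largest `δ` such that every open
ball of radius `δ` is contained in some element of `U`. -/
noncomputable def leb {X : Type*} [MetricSpace X] (U : Set (Set X)) : ℝ≥0∞ :=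
  sSup {δ : ℝ≥0∞ | ∀ x : X, ∃ A ∈ U, EMetric.ball x δ ⊆ A}

/-- The cover `{g⁻¹(A) : A ∈ U}`. -/
def preCov {X : Type*} (g : X → X) (U : Set (Set X)) : Set (Set X) :=
  (fun A => g ⁻¹' A) '' U

/-- The join `U ∨ V = {A ∩ B : A ∈ U, B ∈ V}` of two covers. -/
def covJoin {X : Type*} (U V : Set (Set X)) : Set (Set X) :=
  {S | ∃ A ∈ U, ∃ B ∈ V, S = A ∩ B}

/-- The cover `U_f^n = ⋁_{k=0}^{n-1} f^{-k}(U)`. -/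
def covSeq {X : Type*} (f : X → X) (U : Set (Set X)) (n : ℕ) : Set (Set X) :=
  {S | ∃ g : Fin n → Set X, (∀ k, g k ∈ U) ∧ S = ⋂ k : Fin n, (f^[(k : ℕ)]) ⁻¹' g k}

/-- `δ_n(f,U)`, the Lebesgue number of `U_f^n`. -/
noncomputable def lebN {X : Type*} [MetricSpace X] (f : X → X) (U : Set (Set X)) (n : ℕ) : ℝ≥0∞ :=
  leb (covSeq f U n)

/-- `h_L^+(f,U) = limsup_n -(1/n) log δ_n(f,U)`. -/
noncomputable def hLplus {X : Type*} [MetricSpace X] (f : X → X) (U : Set (Set X)) : EReal :=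
  Filter.limsup (fun n : ℕ => ((-Real.log ((lebN f U n).toReal) / n : ℝ) : EReal)) atTop

/-- `h_L^-(f,U) = liminf_n -(1/n) log δ_n(f,U)`. -/
noncomputable def hLminus {X : Type*} [MetricSpace X] (f : X → X) (U : Set (Set X)) : EReal :=
  Filter.liminf (fun n : ℕ => ((-Real.log ((lebN f U n).toReal) / n : ℝ) : EReal)) atTop

/-- `h_L^+(f)`: supremum over finite open covers. -/
noncomputable def hLplusSup {X : Type*} [MetricSpace X] (f : X → X) : EReal :=
  ⨆ (U : Set (Set X)) (_ : IsOpenCover U ∧ U.Finite), hLplus f U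

/-- `h_L^-(f)`: supremum over finite open covers. -/
noncomputable def hLminusSup {X : Type*} [MetricSpace X] (f : X → X) : EReal :=
  ⨆ (U : Set (Set X)) (_ : IsOpenCover U ∧ U.Finite), hLminus f U

/-- The diameter of a cover: supremum of diameters of its elements. -/
noncomputable def covDiam {X : Type*} [MetricSpace X] (U : Set (Set X)) : ℝ≥0∞ :=
  ⨆ A ∈ U, EMetric.diam A

/-- `U` refines `V`: every element of `U` is contained in some element of `V`. -/
def Refines {X : Type*} (U V : Set (Set X)) : Prop :=
  ∀ A ∈ U, ∃ B ∈ V, A ⊆ B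

/-- `N(γ)`: the minimal number of open `γ`-balls needed to cover `X`. -/
noncomputable def covN (X : Type*) [MetricSpace X] (γ : ℝ≥0∞) : ℕ :=
  sInf {n : ℕ | ∃ s : Finset X, s.card = n ∧ ⋃ x ∈ s, EMetric.ball x γ = Set.univ}

/-- `S(U)`: the smallest cardinality of a subcover of `U`. -/
noncomputable def covS {X : Type*} [MetricSpace X] (U : Set (Set X)) : ℕ :=
  sInf {m : ℕ | ∃ W ⊆ U, ⋃₀ W = Set.univ ∧ W.ncard = m}

/-- `s_n(f,ε)`: maximal cardinality of an `(n,ε)`-separated set. -/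
noncomputable def sep {X : Type*} [MetricSpace X] (f : X → X) (n : ℕ) (ε : ℝ) : ℕ :=
  sSup {m : ℕ | ∃ E : Finset X, E.card = m ∧
    ∀ x ∈ E, ∀ y ∈ E, x ≠ y → ∃ k < n, ε < dist (f^[k] x) (f^[k] y)}

/-- Topological entropy via `(n,ε)`-separated sets. -/
noncomputable def topEnt {X : Type*} [MetricSpace X] (f : X → X) : EReal :=
  ⨆ (ε : ℝ) (_ : 0 < ε),
    Filter.limsup (fun n : ℕ => ((Real.log (sep f n ε) / n : ℝ) : EReal)) atTop

/-- Upper box dimension of `X`. -/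
noncomputable def dimB (X : Type*) [MetricSpace X] : EReal :=
  Filter.limsup
    (fun γ : ℝ => ((Real.log (covN X (ENNReal.ofReal γ)) / -Real.log γ : ℝ) : EReal))
    (nhdsWithin (0:ℝ) (Set.Ioi 0))

/-!
The cover `U_f^n = ⋁_{k<n} f^{-k}U` is an open cover for `f^n` whose `m`-th join under `f^n` is
`U_f^{mn}`, so `δ_m(f^n, U_f^n) = δ_{mn}(f, U)`; conversely `V_f^{mn}` refines `V_{f^n}^m`, so
`δ_m(f^n, V) ≥ δ_{mn}(f, V)`. These give `h_L^±(f^n) ≥ n · h_L^±(f)` and `≤` respectively, once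
the growth rates of `-log δ_j(f, U)` may be read off along the multiples `j = mn` alone. That holds
because `-log δ_j` is nondecreasing in `j` and rounding `j` to a multiple of `n` moves it by less
than `n`, which is `o(j)`.
-/

section Growth

variable {a : ℕ → ℝ} {n : ℕ}

lemma eventually_div_le_of_eventually_div_mul_lt (ha : MonotoneOn a (Ici 1)) (hn : 0 < n)
    {r s : ℝ} (hrs : r < s) (h : ∀ᶠ m in atTop, a (m * n) / (m * n : ℕ) < r) :
    ∀ᶠ j in atTop, a j / j ≤ s := by
  obtain ⟨M, hM⟩ := eventually_atTop.1 h
  obtain ⟨K, hK⟩ := exists_nat_ge (|r| * n / (s - r))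
  filter_upwards [eventually_ge_atTop (M * n + K + 1)] with j hj
  set m := j / n + 1
  have hjm : j < m * n := by
    have := Nat.lt_div_mul_add (a := j) hn
    rwa [add_mul, one_mul]
  have hmj : m * n ≤ j + n := by
    have := Nat.div_mul_le_self j n
    rw [add_mul, one_mul]; omega
  have hMm : M ≤ m := by
    have : M ≤ j / n := (Nat.le_div_iff_mul_le hn).2 (by nlinarith)
    omega
  have hj : (0 : ℝ) < j := by exact_mod_cast (show 0 < j by omega)
  have hnm : (0 : ℝ) < (m * n : ℕ) := by exact_mod_cast (show 0 < m * n by omega)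
  have hlt : a (m * n) < r * (m * n : ℕ) := (div_lt_iff₀ hnm).1 (hM m hMm)
  have hle : a j ≤ a (m * n) := ha (show 1 ≤ j by omega) (show 1 ≤ m * n by omega) hjm.le
  have hK' : |r| * n ≤ (s - r) * j := by
    rw [div_le_iff₀ (sub_pos.2 hrs)] at hK
    have : (K : ℝ) ≤ j := by exact_mod_cast (show K ≤ j by omega)
    nlinarith
  have hround : r * (m * n : ℕ) ≤ r * j + |r| * n := by
    have h1 : (j : ℝ) < (m * n : ℕ) := by exact_mod_cast hjm
    have h2 : ((m * n : ℕ) : ℝ) ≤ j + n := by exact_mod_cast hmj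
    nlinarith [le_abs_self r, neg_abs_le r]
  rw [div_le_iff₀ hj]
  linarith

lemma eventually_le_div_of_eventually_lt_div_mul (ha : MonotoneOn a (Ici 1)) (hn : 0 < n)
    {r s : ℝ} (hrs : r < s) (h : ∀ᶠ m in atTop, s < a (m * n) / (m * n : ℕ)) :
    ∀ᶠ j in atTop, r ≤ a j / j := by
  obtain ⟨M, hM⟩ := eventually_atTop.1 h
  obtain ⟨K, hK⟩ := exists_nat_ge (|s| * n / (s - r))
  filter_upwards [eventually_ge_atTop ((M + 1) * n + K)] with j hj
  set m := j / n
  have hmj : m * n ≤ j := Nat.div_mul_le_self j n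
  have hjm : j < m * n + n := Nat.lt_div_mul_add hn
  have hMm : M + 1 ≤ m := (Nat.le_div_iff_mul_le hn).2 (by nlinarith)
  have hj : (0 : ℝ) < j := by exact_mod_cast (show 0 < j by nlinarith)
  have hnm : (0 : ℝ) < (m * n : ℕ) := by exact_mod_cast (show 0 < m * n by nlinarith)
  have hlt : s * (m * n : ℕ) < a (m * n) := (lt_div_iff₀ hnm).1 (hM m (by omega))
  have hle : a (m * n) ≤ a j := ha (show 1 ≤ m * n by nlinarith) (show 1 ≤ j by nlinarith) hmj
  have hK' : |s| * n ≤ (s - r) * j := by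
    rw [div_le_iff₀ (sub_pos.2 hrs)] at hK
    have : (K : ℝ) ≤ j := by exact_mod_cast (show K ≤ j by omega)
    nlinarith
  have hround : s * j - |s| * n ≤ s * (m * n : ℕ) := by
    have h1 : ((m * n : ℕ) : ℝ) ≤ j := by exact_mod_cast hmj
    have h2 : (j : ℝ) < (m * n : ℕ) + n := by exact_mod_cast hjm
    nlinarith [le_abs_self s, neg_abs_le s]
  rw [le_div_iff₀ hj]
  linarith

lemma limsup_div_comp_mul_eq (ha : MonotoneOn a (Ici 1)) (hn : 0 < n) :
    limsup (fun m => ((a (m * n) / (m * n : ℕ) : ℝ) : EReal)) atTop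
      = limsup (fun j => ((a j / j : ℝ) : EReal)) atTop := by
  refine le_antisymm ((tendsto_id.atTop_mul_const' hn).limsup_comp_le_limsup
    (u := fun j => ((a j / j : ℝ) : EReal))) (EReal.le_of_forall_lt_iff_le.1 fun s hs => ?_)
  obtain ⟨r, hr, hrs⟩ := EReal.exists_between_coe_real hs
  have h := eventually_div_le_of_eventually_div_mul_lt ha hn (EReal.coe_lt_coe_iff.1 hrs)
    ((eventually_lt_of_limsup_lt hr).mono fun m hm => EReal.coe_lt_coe_iff.1 hm)
  exact limsup_le_of_le (by isBoundedDefault) (h.mono fun j hj => EReal.coe_le_coe_iff.2 hj)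

lemma liminf_div_comp_mul_eq (ha : MonotoneOn a (Ici 1)) (hn : 0 < n) :
    liminf (fun m => ((a (m * n) / (m * n : ℕ) : ℝ) : EReal)) atTop
      = liminf (fun j => ((a j / j : ℝ) : EReal)) atTop := by
  refine le_antisymm (EReal.ge_of_forall_gt_iff_ge.1 fun r hr => ?_)
    ((tendsto_id.atTop_mul_const' hn).liminf_le_liminf_comp
      (u := fun j => ((a j / j : ℝ) : EReal)))
  obtain ⟨s, hrs, hs⟩ := EReal.exists_between_coe_real hr
  have h := eventually_le_div_of_eventually_lt_div_mul ha hn (EReal.coe_lt_coe_iff.1 hrs)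
    ((eventually_lt_of_lt_liminf hs).mono fun m hm => EReal.coe_lt_coe_iff.1 hm)
  exact le_liminf_of_le (by isBoundedDefault) (h.mono fun j hj => EReal.coe_le_coe_iff.2 hj)

lemma coe_div_eq_mul_coe_div_mul (a : ℝ) (n m : ℕ) (hn : 0 < n) :
    ((a / m : ℝ) : EReal) = (n : EReal) * ((a / (m * n : ℕ) : ℝ) : EReal) := by
  rw [← EReal.coe_coe_eq_natCast, ← EReal.coe_mul, EReal.coe_eq_coe_iff]
  rcases m.eq_zero_or_pos with rfl | hm
  · simp
  · have : (n : ℝ) ≠ 0 := by positivity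
    push_cast
    field_simp

lemma limsup_div_comp_mul (ha : MonotoneOn a (Ici 1)) (hn : 0 < n) :
    limsup (fun m => ((a (m * n) / m : ℝ) : EReal)) atTop
      = n * limsup (fun j => ((a j / j : ℝ) : EReal)) atTop := by
  rw [funext fun m => coe_div_eq_mul_coe_div_mul (a (m * n)) n m hn,
    EReal.limsup_const_mul_of_nonneg_of_ne_top (by positivity) (EReal.natCast_ne_top n),
    limsup_div_comp_mul_eq ha hn]

lemma liminf_div_comp_mul (ha : MonotoneOn a (Ici 1)) (hn : 0 < n) :
    liminf (fun m => ((a (m * n) / m : ℝ) : EReal)) atTop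
      = n * liminf (fun j => ((a j / j : ℝ) : EReal)) atTop := by
  rw [funext fun m => coe_div_eq_mul_coe_div_mul (a (m * n)) n m hn,
    EReal.liminf_const_mul_of_nonneg_of_ne_top (by positivity) (EReal.natCast_ne_top n),
    liminf_div_comp_mul_eq ha hn]

end Growth

section Covers

variable {X : Type*} [MetricSpace X]

lemma leb_mono {U V : Set (Set X)} (h : Refines U V) : leb U ≤ leb V :=
  sSup_le_sSup fun _ hδ x =>
    let ⟨A, hA, hball⟩ := hδ x
    let ⟨B, hB, hAB⟩ := h A hA
    ⟨B, hB, hball.trans hAB⟩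

lemma leb_eq_top_of_univ_mem {V : Set (Set X)} (hV : univ ∈ V) : leb V = ⊤ :=
  top_unique (le_sSup fun _ => ⟨univ, hV, subset_univ _⟩)

lemma leb_eq_top_of_isEmpty [IsEmpty X] (V : Set (Set X)) : leb V = ⊤ :=
  top_unique (le_sSup fun x => isEmptyElim x)

lemma leb_pos [CompactSpace X] {V : Set (Set X)} (hV : IsOpenCover V) : 0 < leb V := by
  obtain ⟨δ, hδ, hball⟩ :=
    lebesgue_number_lemma_of_metric_sUnion isCompact_univ hV.1 hV.2.symm.subset
  refine lt_of_lt_of_le (ENNReal.ofReal_pos.2 hδ) (le_sSup fun x => ?_)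
  obtain ⟨A, hA, hsub⟩ := hball x (mem_univ x)
  exact ⟨A, hA, fun y hy => hsub (edist_lt_ofReal.1 hy)⟩

lemma leb_ne_top [CompactSpace X] [Nonempty X] {V : Set (Set X)} (hV : univ ∉ V) :
    leb V ≠ ⊤ := by
  intro htop
  obtain ⟨x⟩ := ‹Nonempty X›
  have hdiam : ediam (univ : Set X) < leb V :=
    htop ▸ (isCompact_univ.isBounded.ediam_ne_top).lt_top
  obtain ⟨δ, hδ, hlt⟩ := lt_sSup_iff.1 hdiam
  obtain ⟨A, hA, hball⟩ := hδ x
  have hA_univ : A = univ := eq_univ_of_univ_subset fun y _ =>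
    hball (lt_of_le_of_lt (edist_le_ediam_of_mem (mem_univ y) (mem_univ x)) hlt)
  exact hV (hA_univ ▸ hA)

-- `univ ∈ W` means `leb W = ⊤`, whose junk `toReal` is `0`; `huniv` then makes `leb V = ⊤` too.
lemma neg_log_leb_le_of_refines [CompactSpace X] {V W : Set (Set X)} (hV : IsOpenCover V)
    (hVW : Refines V W) (huniv : univ ∈ W → univ ∈ V) :
    -Real.log (leb W).toReal ≤ -Real.log (leb V).toReal := by
  rcases isEmpty_or_nonempty X with hX | hX
  · rw [leb_eq_top_of_isEmpty, leb_eq_top_of_isEmpty]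
  by_cases hW : univ ∈ W
  · rw [leb_eq_top_of_univ_mem hW, leb_eq_top_of_univ_mem (huniv hW)]
  have hle : leb V ≤ leb W := leb_mono hVW
  have hW_top : leb W ≠ ⊤ := leb_ne_top hW
  exact neg_le_neg (Real.log_le_log (ENNReal.toReal_pos (leb_pos hV).ne' (ne_top_of_le_ne_top
    hW_top hle)) (ENNReal.toReal_mono hW_top hle))

lemma covSeq_isOpenCover {f : X → X} (hf : Continuous f) {U : Set (Set X)}
    (hU : IsOpenCover U) (m : ℕ) : IsOpenCover (covSeq f U m) := by
  refine ⟨?_, eq_univ_of_forall fun x => ?_⟩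
  · rintro _ ⟨g, hg, rfl⟩
    exact isOpen_iInter_of_finite fun k => (hf.iterate k).isOpen_preimage _ (hU.1 _ (hg k))
  · have hx : ∀ k : ℕ, ∃ A ∈ U, f^[k] x ∈ A := fun k =>
      mem_sUnion.1 (by rw [hU.2]; exact mem_univ _)
    choose g hg hgx using hx
    exact ⟨_, ⟨fun k => g k, fun k => hg k, rfl⟩, mem_iInter.2 fun k => hgx k⟩

end Covers

section Iterates

variable {X : Type*}

lemma covSeq_finite (f : X → X) {U : Set (Set X)} (hU : U.Finite) (m : ℕ) :
    (covSeq f U m).Finite := by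
  refine ((Finite.pi fun _ => hU).image
    fun g : Fin m → Set X => ⋂ k : Fin m, f^[k] ⁻¹' g k).subset ?_
  rintro _ ⟨g, hg, rfl⟩
  exact ⟨g, fun k _ => hg k, rfl⟩

lemma covSeq_refines (f : X → X) (U : Set (Set X)) {j k : ℕ} (h : j ≤ k) :
    Refines (covSeq f U k) (covSeq f U j) := by
  rintro _ ⟨g, hg, rfl⟩
  exact ⟨_, ⟨fun i => g (Fin.castLE h i), fun i => hg _, rfl⟩,
    subset_iInter fun i => iInter_subset (fun i : Fin k => f^[i] ⁻¹' g i) (Fin.castLE h i)⟩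

lemma univ_mem_covSeq (f : X → X) {U : Set (Set X)} (hU : univ ∈ U) (m : ℕ) :
    univ ∈ covSeq f U m :=
  ⟨fun _ => univ, fun _ => hU, by simp⟩

lemma univ_mem_of_univ_mem_covSeq {f : X → X} {U : Set (Set X)} {m : ℕ} (hm : 0 < m)
    (h : univ ∈ covSeq f U m) : univ ∈ U := by
  obtain ⟨g, hg, hS⟩ := h
  have h0 : univ ⊆ g ⟨0, hm⟩ := hS ▸ iInter_subset (fun k : Fin m => f^[k] ⁻¹' g k) ⟨0, hm⟩
  exact eq_univ_of_univ_subset h0 ▸ hg ⟨0, hm⟩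

lemma iInter_preimage_iterate_mul (f : X → X) {m n : ℕ} (h : Fin (m * n) → Set X) :
    ⋂ i : Fin (m * n), f^[i] ⁻¹' h i
      = ⋂ j : Fin m, (f^[n])^[j] ⁻¹' ⋂ k : Fin n, f^[k] ⁻¹' h (finProdFinEquiv (j, k)) := by
  rw [← finProdFinEquiv.surjective.iInter_comp]
  ext x
  simp only [mem_iInter, mem_preimage, Prod.forall, finProdFinEquiv_apply_val,
    Function.iterate_add_apply, ← Function.iterate_mul]

lemma covSeq_iterate (f : X → X) (U : Set (Set X)) (m n : ℕ) :
    covSeq (f^[n]) (covSeq f U n) m = covSeq f U (m * n) := by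
  ext S
  constructor
  · rintro ⟨G, hG, rfl⟩
    choose g hg hGeq using hG
    refine ⟨fun i => g (finProdFinEquiv.symm i).1 (finProdFinEquiv.symm i).2,
      fun i => hg _ _, ?_⟩
    simp only [iInter_preimage_iterate_mul, Equiv.symm_apply_apply, hGeq]
  · rintro ⟨h, hh, rfl⟩
    exact ⟨fun j => ⋂ k : Fin n, f^[k] ⁻¹' h (finProdFinEquiv (j, k)),
      fun j => ⟨fun k => h (finProdFinEquiv (j, k)), fun k => hh _, rfl⟩,
      iInter_preimage_iterate_mul f h⟩

lemma covSeq_mul_refines_covSeq_iterate (f : X → X) (V : Set (Set X)) (m : ℕ) {n : ℕ}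
    (hn : 0 < n) : Refines (covSeq f V (m * n)) (covSeq (f^[n]) V m) := by
  rintro _ ⟨h, hh, rfl⟩
  refine ⟨_, ⟨fun j => h (finProdFinEquiv (j, ⟨0, hn⟩)), fun j => hh _, rfl⟩, ?_⟩
  rw [iInter_preimage_iterate_mul]
  exact iInter_mono fun j => preimage_mono
    (iInter_subset (fun k : Fin n => f^[k] ⁻¹' h (finProdFinEquiv (j, k))) ⟨0, hn⟩)

end Iterates

section Entropy

variable {X : Type*} [MetricSpace X] [CompactSpace X] {f : X → X} {n : ℕ}

lemma monotoneOn_neg_log_lebN (hf : Continuous f) {U : Set (Set X)} (hU : IsOpenCover U) :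
    MonotoneOn (fun j => -Real.log (lebN f U j).toReal) (Ici 1) := fun _ hj k _ hjk =>
  neg_log_leb_le_of_refines (covSeq_isOpenCover hf hU k) (covSeq_refines f U hjk)
    fun h => univ_mem_covSeq f (univ_mem_of_univ_mem_covSeq hj h) k

lemma neg_log_lebN_iterate_le (hf : Continuous f) {V : Set (Set X)} (hV : IsOpenCover V)
    (hn : 0 < n) {m : ℕ} (hm : 0 < m) :
    -Real.log (lebN (f^[n]) V m).toReal ≤ -Real.log (lebN f V (m * n)).toReal :=
  neg_log_leb_le_of_refines (covSeq_isOpenCover hf hV _)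
    (covSeq_mul_refines_covSeq_iterate f V m hn)
    fun h => univ_mem_covSeq f (univ_mem_of_univ_mem_covSeq hm h) _

lemma hLplus_iterate_covSeq (hf : Continuous f) {U : Set (Set X)} (hU : IsOpenCover U)
    (hn : 0 < n) : hLplus (f^[n]) (covSeq f U n) = n * hLplus f U := by
  have h := limsup_div_comp_mul (monotoneOn_neg_log_lebN hf hU) hn
  simp only [lebN, ← covSeq_iterate] at h
  exact h

lemma hLminus_iterate_covSeq (hf : Continuous f) {U : Set (Set X)} (hU : IsOpenCover U)
    (hn : 0 < n) : hLminus (f^[n]) (covSeq f U n) = n * hLminus f U := by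
  have h := liminf_div_comp_mul (monotoneOn_neg_log_lebN hf hU) hn
  simp only [lebN, ← covSeq_iterate] at h
  exact h

lemma eventually_neg_log_lebN_iterate_div_le (hf : Continuous f) {V : Set (Set X)}
    (hV : IsOpenCover V) (hn : 0 < n) :
    ∀ᶠ m : ℕ in atTop, ((-Real.log (lebN (f^[n]) V m).toReal / m : ℝ) : EReal)
      ≤ ((-Real.log (lebN f V (m * n)).toReal / m : ℝ) : EReal) := by
  filter_upwards [eventually_gt_atTop 0] with m hm
  exact EReal.coe_le_coe_iff.2
    (div_le_div_of_nonneg_right (neg_log_lebN_iterate_le hf hV hn hm) m.cast_nonneg)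

lemma hLplus_iterate_le (hf : Continuous f) {V : Set (Set X)} (hV : IsOpenCover V)
    (hn : 0 < n) : hLplus (f^[n]) V ≤ n * hLplus f V := by
  rw [hLplus, hLplus, ← limsup_div_comp_mul (monotoneOn_neg_log_lebN hf hV) hn]
  exact limsup_le_limsup (eventually_neg_log_lebN_iterate_div_le hf hV hn)

lemma hLminus_iterate_le (hf : Continuous f) {V : Set (Set X)} (hV : IsOpenCover V)
    (hn : 0 < n) : hLminus (f^[n]) V ≤ n * hLminus f V := by
  rw [hLminus, hLminus, ← liminf_div_comp_mul (monotoneOn_neg_log_lebN hf hV) hn]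
  exact liminf_le_liminf (eventually_neg_log_lebN_iterate_div_le hf hV hn)

end Entropy

lemma biSup_eq_mul_biSup {ι : Type*} {p : ι → Prop} {F G : ι → EReal} {c : EReal}
    (hc : 0 < c) (hc' : c ≠ ⊤) (hle : ∀ i, p i → F i ≤ c * G i)
    (hge : ∀ i, p i → ∃ j, p j ∧ c * G i ≤ F j) :
    ⨆ (i) (_ : p i), F i = c * ⨆ (i) (_ : p i), G i := by
  refine le_antisymm (iSup₂_le fun i hi =>
    (hle i hi).trans (mul_le_mul_of_nonneg_left (le_iSup₂ (f := fun i _ => G i) i hi) hc.le)) ?_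
  rw [EReal.mul_comm, ← EReal.le_div_iff_mul_le hc hc']
  refine iSup₂_le fun i hi => ?_
  obtain ⟨j, hj, hij⟩ := hge i hi
  rw [EReal.le_div_iff_mul_le hc hc', EReal.mul_comm]
  exact hij.trans (le_iSup₂ (f := fun i _ => F i) j hj)

/-- For every `n > 0`, `h_L^+(f^n) = n · h_L^+(f)` and `h_L^-(f^n) = n · h_L^-(f)`. -/
theorem hL_iterate {X : Type*} [MetricSpace X] [CompactSpace X]
    (f : X → X) (hf : Continuous f) (n : ℕ) (hn : 0 < n) :
    hLplusSup (f^[n]) = (n : EReal) * hLplusSup f ∧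
    hLminusSup (f^[n]) = (n : EReal) * hLminusSup f := by
  have hn' : (0 : EReal) < n := by exact_mod_cast hn
  have hcovSeq : ∀ U : Set (Set X), IsOpenCover U ∧ U.Finite →
      IsOpenCover (covSeq f U n) ∧ (covSeq f U n).Finite :=
    fun U hU => ⟨covSeq_isOpenCover hf hU.1 n, covSeq_finite f hU.2 n⟩
  exact ⟨biSup_eq_mul_biSup hn' (EReal.natCast_ne_top n)
      (fun V hV => hLplus_iterate_le hf hV.1 hn)
      (fun U hU => ⟨_, hcovSeq U hU, (hLplus_iterate_covSeq hf hU.1 hn).ge⟩),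
    biSup_eq_mul_biSup hn' (EReal.natCast_ne_top n)
      (fun V hV => hLminus_iterate_le hf hV.1 hn)
      (fun U hU => ⟨_, hcovSeq U hU, (hLminus_iterate_covSeq hf hU.1 hn).ge⟩)⟩
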